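/- Let k ≥ 2 and n ≥ 1. Let B = (A_L, A_R, ψ) be any bimachine over the alphabet Σ_k = {1,...,2k} that represents the partial function f_n^{(k)} (i.e., the generalized output ψ*(s_L, w, s_R) is defined exactly for w in the domain of f_n^{(k)}, and equals f_n^{(k)}(w) there). Then the left automaton A_L has at least k^n states or the right automaton A_R has at least k^n states. -/
import Mathlib


/-- The full alphabet `Σ_k = {1, …, 2k}` (letters are natural numbers). -/
def SigmaFull (k : ℕ) : Set ℕ := {a | 1 ≤ a ∧ a ≤ 2 * k}

/-- The lower half alphabet `Σ'_k = {1, …, k}`. -/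
def SigmaLo (k : ℕ) : Set ℕ := {a | 1 ≤ a ∧ a ≤ k}

/-- The upper half alphabet `Σ''_k = {k+1, …, 2k}`. -/
def SigmaHi (k : ℕ) : Set ℕ := {a | k + 1 ≤ a ∧ a ≤ 2 * k}

/-- Words over a subalphabet `S`. -/
def Words (S : Set ℕ) : Set (List ℕ) := {w | ∀ a ∈ w, a ∈ S}

/-- The language `L^{(i,j)}_n = (Σ'_k)* · i · (Σ'_k)^{n-1} · (Σ''_k)^{n-1} · j · (Σ''_k)*`. -/
def Lang (k n i j : ℕ) : Set (List ℕ) :=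
  {w | ∃ u x y v : List ℕ, u ∈ Words (SigmaLo k) ∧ x ∈ Words (SigmaLo k) ∧
    x.length = n - 1 ∧ y ∈ Words (SigmaHi k) ∧ y.length = n - 1 ∧
    v ∈ Words (SigmaHi k) ∧ w = u ++ [i] ++ x ++ y ++ [j] ++ v}

/-- The graph of the partial function `f_n^{(k)}`: it maps `α` to the two-letter
word `ji` whenever `α ∈ L^{(i,j)}_n` for some `1 ≤ i ≤ k` and `k+1 ≤ j ≤ 2k`. -/
def fGraph (k n : ℕ) (α ω : List ℕ) : Prop :=
  ∃ i j : ℕ, 1 ≤ i ∧ i ≤ k ∧ k + 1 ≤ j ∧ j ≤ 2 * k ∧ α ∈ Lang k n i j ∧ ω = [j, i]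

/-- The domain of the partial function `f_n^{(k)}`. -/
def fDom (k n : ℕ) (α : List ℕ) : Prop := ∃ ω, fGraph k n α ω

/-- A bimachine over the alphabet of natural numbers, with word output:
two deterministic automata (all states final) and an output function `ψ`. -/
structure Bimachine (QL QR : Type) where
  sL : QL
  δL : QL → ℕ → QL
  sR : QR
  δR : QR → ℕ → QR
  ψ : QL → ℕ → QR → Option (List ℕ)

/-- The extended transition function `δ*` of a deterministic automaton. -/
def dstar {Q : Type} (δ : Q → ℕ → Q) (q : Q) (w : List ℕ) : Q := w.foldl δ q

/-- Auxiliary form of the generalized output function, by recursion on the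
reversed input word: `ψ*(l, ε, r) = ε` and
`ψ*(l, tσ, r) = ψ*(l, t, δ_R(r, σ)) · ψ(δ_L*(l, t), σ, r)`. -/
def psiStarRev {QL QR : Type} (B : Bimachine QL QR) (l : QL) :
    List ℕ → QR → Option (List ℕ)
  | [], _ => some []
  | σ :: s, r => do
      let o₁ ← psiStarRev B l s (B.δR r σ)
      let o₂ ← B.ψ (dstar B.δL l s.reverse) σ r
      return o₁ ++ o₂

/-- The generalized output function `ψ*` of a bimachine (a partial function,
modelled via `Option`). -/
def psiStar {QL QR : Type} (B : Bimachine QL QR) (l : QL) (t : List ℕ) (r : QR) :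
    Option (List ℕ) :=
  psiStarRev B l t.reverse r

/-- A bimachine `B` represents the partial function `f_n^{(k)}`: for every word `w`
over `Σ_k`, the generalized output `ψ*(s_L, w, s_R)` is defined exactly when `w` is
in the domain of `f_n^{(k)}`, and it agrees with `f_n^{(k)}` wherever defined. -/
def Represents {QL QR : Type} (B : Bimachine QL QR) (k n : ℕ) : Prop :=
  ∀ w : List ℕ, w ∈ Words (SigmaFull k) →
    ((psiStar B B.sL w B.sR).isSome ↔ fDom k n w) ∧
    (∀ ω : List ℕ, fGraph k n w ω → psiStar B B.sL w B.sR = some ω)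

lemma dstar_append {Q : Type} (δ : Q → ℕ → Q) (q : Q) (s t : List ℕ) :
    dstar δ q (s ++ t) = dstar δ (dstar δ q s) t :=
  List.foldl_append ..

lemma psiStarRev_append {QL QR : Type} (B : Bimachine QL QR) (l : QL)
    (u v : List ℕ) (r : QR) :
    psiStarRev B l (u ++ v) r =
      (psiStarRev B l v (dstar B.δR r u)).bind fun o1 =>
        (psiStarRev B (dstar B.δL l v.reverse) u r).bind fun o2 =>
          some (o1 ++ o2) := by
  induction u generalizing r with
  | nil =>
    simp only [List.nil_append, psiStarRev, dstar, List.foldl_nil]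
    cases psiStarRev B l v r <;> simp
  | cons σ u ih =>
    simp only [List.cons_append, psiStarRev, List.append_eq]
    rw [ih]
    simp only [dstar, List.foldl_cons, List.reverse_append, List.foldl_append]
    cases psiStarRev B l v (List.foldl B.δR (B.δR r σ) u) <;>
      cases psiStarRev B (List.foldl B.δL l v.reverse) u (B.δR r σ) <;>
        simp
    all_goals
      cases B.ψ (List.foldr (fun x y => B.δL y x) (List.foldr (fun x y => B.δL y x) l v) u) σ r <;>
        simp

lemma psiStar_append {QL QR : Type} (B : Bimachine QL QR) (l : QL)
    (s t : List ℕ) (r : QR) :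
    psiStar B l (s ++ t) r =
      (psiStar B l s (dstar B.δR r t.reverse)).bind fun o1 =>
        (psiStar B (dstar B.δL l s) t r).bind fun o2 => some (o1 ++ o2) := by
  simp only [psiStar, List.reverse_append]
  rw [psiStarRev_append]
  simp

lemma take_getElem_drop {l : List ℕ} {d : ℕ} (h : d < l.length) :
    l.take d ++ [l[d]] ++ l.drop (d + 1) = l := by
  rw [List.append_assoc, List.singleton_append, ← List.drop_eq_getElem_cons h,
    List.take_append_drop]

lemma key_fGraph {k n : ℕ} (hk : 1 ≤ k) (w z : List ℕ) {d e : ℕ}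
    (hw : w ∈ Words (SigmaLo k)) (hz : z ∈ Words (SigmaHi k))
    (hwlen : w.length = n) (hzlen : z.length = n)
    (hd : d < w.length) (he : e < z.length) :
    fGraph k n ((w ++ List.replicate d 1) ++ (List.replicate (n - 1 - e) (k + 1) ++ z))
      [z[e], w[d]] := by
  have hiw := hw _ (List.getElem_mem hd)
  have hjz := hz _ (List.getElem_mem he)
  refine ⟨w[d], z[e], hiw.1, hiw.2, hjz.1, hjz.2, ?_, rfl⟩
  refine ⟨w.take d, w.drop (d + 1) ++ List.replicate d 1,
    List.replicate (n - 1 - e) (k + 1) ++ z.take e, z.drop (e + 1), ?_, ?_, ?_, ?_, ?_, ?_, ?_⟩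
  · intro a ha; exact hw a (List.mem_of_mem_take ha)
  · intro a ha
    rcases List.mem_append.mp ha with h' | h'
    · exact hw a (List.mem_of_mem_drop h')
    · have := List.eq_of_mem_replicate h'; subst this; exact ⟨le_refl 1, hk⟩
  · simp only [List.length_append, List.length_drop, List.length_replicate]
    omega
  · intro a ha
    rcases List.mem_append.mp ha with h' | h'
    · have := List.eq_of_mem_replicate h'; subst this; constructor <;> omega
    · exact hz a (List.mem_of_mem_take h')
  · simp only [List.length_append, List.length_take, List.length_replicate]
    omega
  · intro a ha; exact hz a (List.mem_of_mem_drop ha)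
  · conv_lhs => rw [← take_getElem_drop hd, ← take_getElem_drop he]
    simp only [List.append_assoc]

lemma ext_bind {F G : Option (List ℕ)} {ω : List ℕ}
    (h : (F.bind fun o1 => G.bind fun o2 => some (o1 ++ o2)) = some ω) :
    ∃ a b, F = some a ∧ G = some b ∧ a ++ b = ω := by
  cases F <;> cases G <;> simp_all

lemma final_comb {A1 A2 C1 C2 : List ℕ} {i1 i2 j1 j2 : ℕ} (hi : i1 ≠ i2) (hj : j1 ≠ j2)
    (e11 : A1 ++ C1 = [j1, i1]) (e12 : A1 ++ C2 = [j2, i1])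
    (e21 : A2 ++ C1 = [j1, i2]) : False := by
  have l1 : A1.length + C1.length = 2 := by
    have := congrArg List.length e11; simpa using this
  have l2 : A1.length + C2.length = 2 := by
    have := congrArg List.length e12; simpa using this
  have l3 : A2.length + C1.length = 2 := by
    have := congrArg List.length e21; simpa using this
  rcases A1 with _ | ⟨a, _ | ⟨a', rest⟩⟩
  · have hA2 : A2 = [] := by
      have : A2.length = 0 := by simp at l1; omega
      exact List.length_eq_zero_iff.mp this
    subst hA2
    simp at e11 e21
    rw [e11] at e21
    simp at e21
    exact hi e21
  · simp at e11 e12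
    exact hj (e11.1 ▸ e12.1)
  · have hC1 : C1 = [] := by
      have : C1.length = 0 := by simp at l1; omega
      exact List.length_eq_zero_iff.mp this
    have hC2 : C2 = [] := by
      have : C2.length = 0 := by simp at l2; omega
      exact List.length_eq_zero_iff.mp this
    subst hC1; subst hC2
    simp at e11 e12
    exact hj (e11.1 ▸ e12.1)

/-- Every bimachine representing `f_n^{(k)}` (for `k ≥ 2`, `n ≥ 1`) has at least
`k^n` states in its left automaton or at least `k^n` states in its right automaton. -/
theorem bimachine_lower_bound_left_or_right (k n : ℕ) (hk : 2 ≤ k) (hn : 1 ≤ n)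
    (QL QR : Type) [Fintype QL] [Fintype QR]
    (B : Bimachine QL QR) (hB : Represents B k n) :
    k ^ n ≤ Fintype.card QL ∨ k ^ n ≤ Fintype.card QR := by
  by_contra hcon
  push_neg at hcon
  obtain ⟨hQL, hQR⟩ := hcon
  have hcard : Fintype.card (Fin n → Fin k) = k ^ n := by
    simp [Fintype.card_fun]
  obtain ⟨f, g, hfg, hL0⟩ := Fintype.exists_ne_map_eq_of_card_lt
    (fun h : Fin n → Fin k => dstar B.δL B.sL (List.ofFn fun m => ((h m : ℕ) + 1)))
    (by rw [hcard]; exact hQL)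
  obtain ⟨p, q, hpq, hR0⟩ := Fintype.exists_ne_map_eq_of_card_lt
    (fun h : Fin n → Fin k => dstar B.δR B.sR (List.ofFn fun m => ((h m : ℕ) + k + 1)).reverse)
    (by rw [hcard]; exact hQR)
  obtain ⟨d, hdne⟩ := Function.ne_iff.mp hfg
  obtain ⟨e, hene⟩ := Function.ne_iff.mp hpq
  set w1 : List ℕ := List.ofFn (fun m => ((f m : ℕ) + 1)) with hw1def
  set w2 : List ℕ := List.ofFn (fun m => ((g m : ℕ) + 1)) with hw2def
  set z1 : List ℕ := List.ofFn (fun m => ((p m : ℕ) + k + 1)) with hz1def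
  set z2 : List ℕ := List.ofFn (fun m => ((q m : ℕ) + k + 1)) with hz2def
  have hw1len : w1.length = n := by simp [hw1def]
  have hw2len : w2.length = n := by simp [hw2def]
  have hz1len : z1.length = n := by simp [hz1def]
  have hz2len : z2.length = n := by simp [hz2def]
  have hd1 : (d : ℕ) < w1.length := by rw [hw1len]; exact d.isLt
  have hd2 : (d : ℕ) < w2.length := by rw [hw2len]; exact d.isLt
  have he1 : (e : ℕ) < z1.length := by rw [hz1len]; exact e.isLt
  have he2 : (e : ℕ) < z2.length := by rw [hz2len]; exact e.isLt
  have hg1 : w1[(d : ℕ)]'hd1 = (f d : ℕ) + 1 := by simp [hw1def]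
  have hg2 : w2[(d : ℕ)]'hd2 = (g d : ℕ) + 1 := by simp [hw2def]
  have hg3 : z1[(e : ℕ)]'he1 = (p e : ℕ) + k + 1 := by simp [hz1def]
  have hg4 : z2[(e : ℕ)]'he2 = (q e : ℕ) + k + 1 := by simp [hz2def]
  have hine : w1[(d : ℕ)]'hd1 ≠ w2[(d : ℕ)]'hd2 := by
    rw [hg1, hg2]
    intro hcontra
    exact hdne (Fin.ext (by omega))
  have hjne : z1[(e : ℕ)]'he1 ≠ z2[(e : ℕ)]'he2 := by
    rw [hg3, hg4]
    intro hcontra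
    exact hene (Fin.ext (by omega))
  have hw1mem : w1 ∈ Words (SigmaLo k) := by
    intro a ha
    simp only [hw1def, List.mem_ofFn, Set.mem_range] at ha
    obtain ⟨m, hm⟩ := ha
    have := (f m).isLt
    exact ⟨by omega, by omega⟩
  have hw2mem : w2 ∈ Words (SigmaLo k) := by
    intro a ha
    simp only [hw2def, List.mem_ofFn, Set.mem_range] at ha
    obtain ⟨m, hm⟩ := ha
    have := (g m).isLt
    exact ⟨by omega, by omega⟩
  have hz1mem : z1 ∈ Words (SigmaHi k) := by
    intro a ha
    simp only [hz1def, List.mem_ofFn, Set.mem_range] at ha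
    obtain ⟨m, hm⟩ := ha
    have := (p m).isLt
    exact ⟨by omega, by omega⟩
  have hz2mem : z2 ∈ Words (SigmaHi k) := by
    intro a ha
    simp only [hz2def, List.mem_ofFn, Set.mem_range] at ha
    obtain ⟨m, hm⟩ := ha
    have := (q m).isLt
    exact ⟨by omega, by omega⟩
  set padL : List ℕ := List.replicate (d : ℕ) 1 with hpadL
  set padR : List ℕ := List.replicate (n - 1 - (e : ℕ)) (k + 1) with hpadR
  have hfull : ∀ w' z' : List ℕ, w' ∈ Words (SigmaLo k) → z' ∈ Words (SigmaHi k) →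
      ((w' ++ padL) ++ (padR ++ z')) ∈ Words (SigmaFull k) := by
    intro w' z' hw' hz' a ha
    simp only [List.mem_append, hpadL, hpadR, List.mem_replicate] at ha
    rcases ha with (h' | h') | (h' | h')
    · have := hw' a h'; exact ⟨this.1, by have := this.2; omega⟩
    · exact ⟨by omega, by omega⟩
    · exact ⟨by omega, by omega⟩
    · have := hz' a h'; exact ⟨by have := this.1; omega, this.2⟩
  have hout : ∀ (w' z' : List ℕ) (hw' : w' ∈ Words (SigmaLo k)) (hz' : z' ∈ Words (SigmaHi k))
      (hwl : w'.length = n) (hzl : z'.length = n) (hd' : (d : ℕ) < w'.length)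
      (he' : (e : ℕ) < z'.length),
      psiStar B B.sL ((w' ++ padL) ++ (padR ++ z')) B.sR = some [z'[(e : ℕ)], w'[(d : ℕ)]] :=
    fun w' z' hw' hz' hwl hzl hd' he' =>
      (hB _ (hfull w' z' hw' hz')).2 _ (key_fGraph (by omega) w' z' hw' hz' hwl hzl hd' he')
  set r := dstar B.δR B.sR ((padR ++ z1).reverse) with hrdef
  set l := dstar B.δL B.sL (w1 ++ padL) with hldef
  have hReq : r = dstar B.δR B.sR ((padR ++ z2).reverse) := by
    rw [hrdef]
    simp only [List.reverse_append, dstar_append, hR0]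
  have hLeq : l = dstar B.δL B.sL (w2 ++ padL) := by
    rw [hldef]
    simp only [dstar_append, hL0]
  have E11 : ((psiStar B B.sL (w1 ++ padL) r).bind fun o1 =>
      (psiStar B l (padR ++ z1) B.sR).bind fun o2 => some (o1 ++ o2))
        = some [z1[(e : ℕ)], w1[(d : ℕ)]] := by
    rw [← psiStar_append]
    exact hout w1 z1 hw1mem hz1mem hw1len hz1len hd1 he1
  have E12 : ((psiStar B B.sL (w1 ++ padL) r).bind fun o1 =>
      (psiStar B l (padR ++ z2) B.sR).bind fun o2 => some (o1 ++ o2))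
        = some [z2[(e : ℕ)], w1[(d : ℕ)]] := by
    rw [hReq, ← psiStar_append]
    exact hout w1 z2 hw1mem hz2mem hw1len hz2len hd1 he2
  have E21 : ((psiStar B B.sL (w2 ++ padL) r).bind fun o1 =>
      (psiStar B l (padR ++ z1) B.sR).bind fun o2 => some (o1 ++ o2))
        = some [z1[(e : ℕ)], w2[(d : ℕ)]] := by
    rw [hLeq, ← psiStar_append]
    exact hout w2 z1 hw2mem hz1mem hw2len hz1len hd2 he1
  obtain ⟨A1, C1, hF1, hG1, h11⟩ := ext_bind E11
  obtain ⟨A1', C2, hF1', hG2, h12⟩ := ext_bind E12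
  obtain ⟨A2, C1', hF2, hG1', h21⟩ := ext_bind E21
  have hA : A1' = A1 := by rw [hF1] at hF1'; exact (Option.some_inj.mp hF1').symm
  have hC : C1' = C1 := by rw [hG1] at hG1'; exact (Option.some_inj.mp hG1').symm
  subst hA; subst hC
  exact final_comb hine hjne h11 h12 h21
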